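/- Let f(x,y) = x^{m₁}·y^{m₂}·∏_{i=1}^n (x − aᵢ·y^{qᵢ}) where m₁, m₂ are non-negative integers, aᵢ = rᵢ·e^{2πi sᵢ} with rᵢ > 0 and sᵢ ∈ [0,1), and q₁,…,qₙ are non-negative integers. Let k := |{q₁,…,qₙ}| be the number of distinct exponents qᵢ. Then there exists a ∈ ℂ with |a| = 1 such that B(f(x,a)) ≥ √(k/12). -/

import Mathlib

open scoped Real Classical

/-- The multiset of non-zero roots (with multiplicity) of a univariate complex polynomial. -/
noncomputable def nonzeroRoots (g : Polynomial ℂ) : Multiset ℂ :=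
  g.roots.filter (fun z => z ≠ 0)

/-- `N_{α,β}(g)`: the number of non-zero roots of `g` (with multiplicity) lying in the
complex sector `{r·e^{iθ} : r > 0, α ≤ θ ≤ β}`. -/
noncomputable def sectorCount (g : Polynomial ℂ) (α β : ℝ) : ℕ :=
  ((nonzeroRoots g).filter
    (fun z => ∃ ρ θ : ℝ, 0 < ρ ∧ α ≤ θ ∧ θ ≤ β ∧
      z = (ρ : ℂ) * Complex.exp (θ * Complex.I))).card

/-- The bias `B(g)` of a univariate complex polynomial: the supremum over
`0 ≤ α ≤ β ≤ 2π` of `|N_{α,β}(g) − n(β−α)/(2π)|`, where `n` is the number of non-zero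
roots of `g` counted with multiplicity. -/
noncomputable def polyBias (g : Polynomial ℂ) : ℝ :=
  sSup {x : ℝ | ∃ α β : ℝ, 0 ≤ α ∧ α ≤ β ∧ β ≤ 2 * Real.pi ∧
    x = |(sectorCount g α β : ℝ) -
      ((nonzeroRoots g).card : ℝ) * (β - α) / (2 * Real.pi)|}

/-- Substituting `y := a` in a bivariate polynomial `f(x,y)`, producing the univariate
polynomial `f(x,a)`. -/
noncomputable def evalY (f : MvPolynomial (Fin 2) ℂ) (a : ℂ) : Polynomial ℂ :=
  MvPolynomial.eval₂ Polynomial.C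
    (fun i => if i = 0 then Polynomial.X else Polynomial.C a) f

open MeasureTheory intervalIntegral

noncomputable def bpsi (v : ℝ) : ℝ := Int.fract v - 1/2
noncomputable def bbc (v : ℝ) : ℝ := (Int.fract v ^ 2 - Int.fract v + 1/6) / 2
noncomputable def bdel (v : ℝ) : ℝ := min (Int.fract v) (1 - Int.fract v)

lemma II_of_bdd {f : ℝ → ℝ} (hf : Measurable f) (C : ℝ) (hC : ∀ x, |f x| ≤ C)
    (a b : ℝ) : IntervalIntegrable f volume a b := by
  rw [intervalIntegrable_iff]
  exact (integrableOn_const (s := Set.uIoc a b) (μ := volume) (C := C) measure_Ioc_lt_top.ne).mono'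
    hf.aestronglyMeasurable.restrict (ae_of_all _ hC)

lemma bpsi_meas : Measurable bpsi := (measurable_fract.sub measurable_const)

lemma bpsi_bdd : ∀ x, |bpsi x| ≤ 1 := by
  intro x
  have h1 := Int.fract_nonneg x
  have h2 := Int.fract_lt_one x
  rw [abs_le]; constructor <;> simp [bpsi] <;> linarith

lemma integral_quad (a b A B C : ℝ) :
    ∫ u in a..b, (A + B*u + C*u^2) = A*(b-a) + B*(b^2-a^2)/2 + C*(b^3-a^3)/3 := by
  have h1 : IntervalIntegrable (fun _ : ℝ => A) volume a b := intervalIntegrable_const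
  have h2 : IntervalIntegrable (fun u : ℝ => B*u) volume a b := by
    apply Continuous.intervalIntegrable; continuity
  have h3 : IntervalIntegrable (fun u : ℝ => C*u^2) volume a b := by
    apply Continuous.intervalIntegrable; continuity
  rw [intervalIntegral.integral_add (h1.add h2) h3, intervalIntegral.integral_add h1 h2,
    intervalIntegral.integral_const, intervalIntegral.integral_const_mul,
    intervalIntegral.integral_const_mul, integral_id, integral_pow]
  push_cast [smul_eq_mul]; ring

lemma piece_eval {f : ℝ → ℝ} {c d : ℝ} (hcd : c ≤ d) (A B C : ℝ)
    (h : ∀ u ∈ Set.Ioc c d, f u = A + B*u + C*u^2) :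
    ∫ u in c..d, f u = A*(d-c) + B*(d^2-c^2)/2 + C*(d^3-c^3)/3 := by
  rw [show (∫ u in c..d, f u) = ∫ u in c..d, (A + B*u + C*u^2) from
    intervalIntegral.integral_congr_ae (by
      apply ae_of_all; intro u hu
      rw [Set.uIoc_of_le hcd] at hu; exact h u hu), integral_quad]

lemma fract_eq_add_one {v : ℝ} (h1 : -1 ≤ v) (h2 : v < 0) : Int.fract v = v + 1 := by
  have h := Int.fract_add_intCast v 1
  rw [← h]
  push_cast
  exact Int.fract_eq_self.mpr ⟨by linarith, by linarith⟩

lemma bpsi_mul_meas (x y : ℝ) : Measurable (fun u => bpsi (x-u) * bpsi (y-u)) :=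
  ((bpsi_meas.comp (measurable_const.sub measurable_id)).mul
    (bpsi_meas.comp (measurable_const.sub measurable_id)))

lemma bpsi_mul_bdd (x y : ℝ) : ∀ u, |bpsi (x-u) * bpsi (y-u)| ≤ 1 := by
  intro u; rw [abs_mul]
  exact mul_le_one₀ (bpsi_bdd _) (abs_nonneg _) (bpsi_bdd _)

lemma bpsi_mul_core {x y : ℝ} (hy : 0 ≤ y) (hyx : y ≤ x) (hx : x < 1) :
    ∫ u in (0:ℝ)..1, bpsi (x-u) * bpsi (y-u) = bbc (x - y) := by
  have II : ∀ a b : ℝ, IntervalIntegrable (fun u => bpsi (x-u) * bpsi (y-u)) volume a b :=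
    fun a b => II_of_bdd (bpsi_mul_meas x y) 1 (bpsi_mul_bdd x y) a b
  rw [← intervalIntegral.integral_add_adjacent_intervals (a := (0:ℝ)) (b := x) (c := 1)
      (II 0 x) (II x 1),
    ← intervalIntegral.integral_add_adjacent_intervals (a := (0:ℝ)) (b := y) (c := x)
      (II 0 y) (II y x)]
  rw [piece_eval hy ((x-1/2)*(y-1/2)) (1-x-y) 1 (by
      intro u hu
      have e1 : Int.fract (x-u) = x-u := Int.fract_eq_self.mpr ⟨by linarith [hu.2, hu.1], by linarith [hu.1]⟩
      have e2 : Int.fract (y-u) = y-u := Int.fract_eq_self.mpr ⟨by linarith [hu.2], by linarith [hu.1]⟩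
      simp only [bpsi, e1, e2]; ring),
    piece_eval hyx ((x-1/2)*(y+1/2)) (-x-y) 1 (by
      intro u hu
      have e1 : Int.fract (x-u) = x-u := Int.fract_eq_self.mpr ⟨by linarith [hu.2], by linarith [hu.1]⟩
      have e2 : Int.fract (y-u) = y-u+1 := fract_eq_add_one (by linarith [hu.2]) (by linarith [hu.1])
      simp only [bpsi, e1, e2]; ring),
    piece_eval hx.le ((x+1/2)*(y+1/2)) (-1-x-y) 1 (by
      intro u hu
      have e1 : Int.fract (x-u) = x-u+1 := fract_eq_add_one (by linarith [hu.2]) (by linarith [hu.1])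
      have e2 : Int.fract (y-u) = y-u+1 := fract_eq_add_one (by linarith [hu.2, hyx]) (by linarith [hu.1, hyx])
      simp only [bpsi, e1, e2]; ring)]
  have hd : Int.fract (x - y) = x - y := Int.fract_eq_self.mpr ⟨by linarith, by linarith⟩
  simp only [bbc, hd]; ring

lemma bbc_congr {v w : ℝ} (h : Int.fract v = Int.fract w) : bbc v = bbc w := by
  simp [bbc, h]

lemma bbc_neg (v : ℝ) : bbc (-v) = bbc v := by
  rcases eq_or_ne (Int.fract v) 0 with h | h
  · have : Int.fract (-v) = 0 := by
      rw [Int.fract_neg_eq_zero]; exact h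
    simp [bbc, this, h]
  · have : Int.fract (-v) = 1 - Int.fract v := Int.fract_neg h
    simp only [bbc, this]; ring

lemma bpsi_fract (x u : ℝ) : bpsi (x - u) = bpsi (Int.fract x - u) := by
  have : Int.fract (x - u) = Int.fract (Int.fract x - u) := by
    rw [Int.fract_eq_fract]
    exact ⟨⌊x⌋, by have := Int.fract_add_floor x; nlinarith [Int.self_sub_fract x]⟩
  simp [bpsi, this]

lemma integral_bpsi_mul (x y : ℝ) :
    ∫ u in (0:ℝ)..1, bpsi (x-u) * bpsi (y-u) = bbc (x - y) := by
  have e : ∀ u : ℝ, bpsi (x-u) * bpsi (y-u) = bpsi (Int.fract x - u) * bpsi (Int.fract y - u) :=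
    fun u => by rw [bpsi_fract x u, bpsi_fract y u]
  have hb : bbc (x - y) = bbc (Int.fract x - Int.fract y) := by
    apply bbc_congr
    rw [Int.fract_eq_fract]
    exact ⟨⌊x⌋ - ⌊y⌋, by push_cast; nlinarith [Int.self_sub_fract x, Int.self_sub_fract y]⟩
  simp only [funext e, hb]
  rcases le_total (Int.fract y) (Int.fract x) with h | h
  · exact bpsi_mul_core (Int.fract_nonneg y) h (Int.fract_lt_one x)
  · rw [show (∫ u in (0:ℝ)..1, bpsi (Int.fract x - u) * bpsi (Int.fract y - u))
        = ∫ u in (0:ℝ)..1, bpsi (Int.fract y - u) * bpsi (Int.fract x - u) by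
      congr 1; ext u; ring]
    rw [bpsi_mul_core (Int.fract_nonneg x) h (Int.fract_lt_one y)]
    rw [← bbc_neg]; congr 1; ring

lemma integral_bpsi (x : ℝ) : ∫ u in (0:ℝ)..1, bpsi (x - u) = 0 := by
  have e : ∀ u : ℝ, bpsi (x-u) = bpsi (Int.fract x - u) := fun u => bpsi_fract x u
  simp only [funext e]
  set v := Int.fract x with hv
  have hv0 : 0 ≤ v := Int.fract_nonneg x
  have hv1 : v < 1 := Int.fract_lt_one x
  have II : ∀ a b : ℝ, IntervalIntegrable (fun u => bpsi (v-u)) volume a b :=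
    fun a b => II_of_bdd (bpsi_meas.comp (measurable_const.sub measurable_id)) 1
      (fun u => bpsi_bdd _) a b
  rw [← intervalIntegral.integral_add_adjacent_intervals (a := (0:ℝ)) (b := v) (c := 1)
      (II 0 v) (II v 1)]
  rw [piece_eval hv0 (v - 1/2) (-1) 0 (by
      intro u hu
      have e1 : Int.fract (v-u) = v-u := Int.fract_eq_self.mpr ⟨by linarith [hu.2], by linarith [hu.1]⟩
      simp only [bpsi, e1]; ring),
    piece_eval hv1.le (v + 1/2) (-1) 0 (by
      intro u hu
      have e1 : Int.fract (v-u) = v-u+1 := fract_eq_add_one (by linarith [hu.2]) (by linarith [hu.1])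
      simp only [bpsi, e1]; ring)]
  ring

lemma bbc_periodic : Function.Periodic bbc 1 := by
  intro v
  exact bbc_congr (by rw [Int.fract_eq_fract]; exact ⟨1, by push_cast; ring⟩)

lemma bdel_congr {v w : ℝ} (h : Int.fract v = Int.fract w) : bdel v = bdel w := by
  simp [bdel, h]

lemma bdel_sq_periodic : Function.Periodic (fun v => bdel v ^ 2) 1 := by
  intro v
  have : bdel (v + 1) = bdel v :=
    bdel_congr (by rw [Int.fract_eq_fract]; exact ⟨1, by push_cast; ring⟩)
  simp [this]

lemma bbc_meas : Measurable bbc := by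
  unfold bbc
  exact (((measurable_fract.pow_const 2).sub measurable_fract).add measurable_const).div_const 2

lemma bbc_bdd : ∀ x, |bbc x| ≤ 1 := by
  intro x
  have h1 := Int.fract_nonneg x
  have h2 := Int.fract_lt_one x
  rw [abs_le]; constructor <;> simp only [bbc] <;> nlinarith

lemma bdel_nonneg (x : ℝ) : 0 ≤ bdel x := by
  have h1 := Int.fract_nonneg x
  have h2 := Int.fract_lt_one x
  simp only [bdel, le_min_iff]; constructor <;> linarith

lemma bdel_sq_meas : Measurable (fun v => bdel v ^ 2) := by
  unfold bdel
  exact (measurable_fract.min (measurable_const.sub measurable_fract)).pow_const 2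

lemma bdel_sq_bdd : ∀ x, |bdel x ^ 2| ≤ 1 := by
  intro x
  have h1 := Int.fract_nonneg x
  have h2 := Int.fract_lt_one x
  have : bdel x ≤ 1 := le_trans (min_le_left _ _) (by linarith)
  rw [abs_of_nonneg (sq_nonneg _)]
  nlinarith [bdel_nonneg x]

lemma per_int_eval {h : ℝ → ℝ} (hper : Function.Periodic h 1)
    (hint : ∀ a b : ℝ, IntervalIntegrable h volume a b) (M : ℤ) (hM : M ≠ 0) (d : ℝ) :
    ∫ t in (0:ℝ)..1, h ((M:ℝ) * t + d) = ∫ w in (0:ℝ)..1, h w := by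
  rw [intervalIntegral.integral_comp_mul_add h (by exact_mod_cast hM) d]
  have h1 : (M:ℝ) * 0 + d = d := by ring
  have h2 : (M:ℝ) * 1 + d = d + M • (1:ℝ) := by
    rw [zsmul_eq_mul]; ring
  rw [h1, h2, hper.intervalIntegral_add_zsmul_eq M d hint,
    hper.intervalIntegral_add_eq d 0]
  simp only [zero_add]
  rw [zsmul_eq_mul, smul_eq_mul, ← mul_assoc,
    inv_mul_cancel₀ (by exact_mod_cast hM : (M:ℝ) ≠ 0), one_mul]

lemma integral_bbc : ∫ w in (0:ℝ)..1, bbc w = 0 := by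
  rw [piece_eval (by norm_num : (0:ℝ) ≤ 1) (1/12) (-1/2) (1/2) (by
    intro u hu
    rcases eq_or_lt_of_le hu.2 with h | h
    · subst h; norm_num [bbc, Int.fract_one]
    · have : Int.fract u = u := Int.fract_eq_self.mpr ⟨hu.1.le, h⟩
      simp only [bbc, this]; ring)]
  norm_num

lemma integral_bdel_sq : ∫ w in (0:ℝ)..1, bdel w ^ 2 = 1/12 := by
  have II : ∀ a b : ℝ, IntervalIntegrable (fun v => bdel v ^ 2) volume a b :=
    fun a b => II_of_bdd bdel_sq_meas 1 bdel_sq_bdd a b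
  rw [← intervalIntegral.integral_add_adjacent_intervals (a := (0:ℝ)) (b := 1/2) (c := 1)
      (II 0 (1/2)) (II (1/2) 1)]
  rw [piece_eval (by norm_num : (0:ℝ) ≤ 1/2) 0 0 1 (by
      intro u hu
      have hf : Int.fract u = u := Int.fract_eq_self.mpr ⟨hu.1.le, by linarith [hu.2]⟩
      have : bdel u = u := by
        simp only [bdel, hf]; exact min_eq_left (by linarith [hu.1, hu.2])
      rw [this]; ring),
    piece_eval (by norm_num : (1:ℝ)/2 ≤ 1) 1 (-2) 1 (by
      intro u hu
      rcases eq_or_lt_of_le hu.2 with h | h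
      · subst h
        have : bdel 1 = 0 := by simp [bdel, Int.fract_one]
        rw [this]; ring
      · have hf : Int.fract u = u := Int.fract_eq_self.mpr ⟨by linarith [hu.1], h⟩
        have : bdel u = 1 - u := by
          simp only [bdel, hf]; exact min_eq_right (by linarith [hu.1])
        rw [this]; ring)]
  norm_num

lemma bdel_le_abs {x y : ℝ} (z : ℤ) (h : x + y = z) : bdel x ≤ |y| := by
  have hy : y = (z - ⌊x⌋ : ℤ) - Int.fract x := by
    push_cast
    have := Int.self_sub_floor x
    nlinarith [Int.self_sub_floor x]
  set z' : ℤ := z - ⌊x⌋ with hz'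
  have h1 := Int.fract_nonneg x
  have h2 := Int.fract_lt_one x
  rcases le_or_gt z' 0 with hc | hc
  · have hzr : (z' : ℝ) ≤ 0 := by exact_mod_cast hc
    have : y ≤ 0 := by rw [hy]; linarith
    rw [abs_of_nonpos this]
    calc bdel x ≤ Int.fract x := min_le_left _ _
      _ ≤ -y := by rw [hy]; linarith
  · have hzr : (1 : ℝ) ≤ (z' : ℝ) := by exact_mod_cast hc
    have hy0 : 0 ≤ y := by rw [hy]; linarith
    rw [abs_of_nonneg hy0]
    calc bdel x ≤ 1 - Int.fract x := min_le_right _ _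
      _ ≤ y := by rw [hy]; linarith

section SQ
variable {ι : Type*} (T : Finset ι) (y : ι → ℝ)

lemma sumpsi_meas : Measurable (fun w => ∑ i ∈ T, bpsi (y i - w)) :=
  Finset.measurable_sum _ (fun i _ => bpsi_meas.comp (measurable_const.sub measurable_id))

lemma sumpsi_bdd : ∀ w, |∑ i ∈ T, bpsi (y i - w)| ≤ (T.card : ℝ) := by
  intro w
  calc |∑ i ∈ T, bpsi (y i - w)| ≤ ∑ i ∈ T, |bpsi (y i - w)| := Finset.abs_sum_le_sum_abs _ _
    _ ≤ ∑ _i ∈ T, (1:ℝ) := Finset.sum_le_sum (fun i _ => bpsi_bdd _)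
    _ = T.card := by simp

lemma sumpsi_sq_meas : Measurable (fun w => (∑ i ∈ T, bpsi (y i - w))^2) :=
  (sumpsi_meas T y).pow_const 2

lemma sumpsi_sq_bdd : ∀ w, |(∑ i ∈ T, bpsi (y i - w))^2| ≤ (T.card : ℝ)^2 := by
  intro w
  rw [abs_of_nonneg (sq_nonneg _), ← sq_abs]
  exact pow_le_pow_left₀ (abs_nonneg _) (sumpsi_bdd T y w) 2

lemma sum_sq_integral :
    ∫ w in (0:ℝ)..1, (∑ i ∈ T, bpsi (y i - w))^2 = ∑ i ∈ T, ∑ j ∈ T, bbc (y i - y j) := by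
  have e : ∀ w : ℝ, (∑ i ∈ T, bpsi (y i - w))^2
      = ∑ i ∈ T, ∑ j ∈ T, bpsi (y i - w) * bpsi (y j - w) := by
    intro w; rw [sq, Finset.sum_mul_sum]
  simp only [e]
  rw [intervalIntegral.integral_finset_sum (fun i _ => ?_)]
  · refine Finset.sum_congr rfl (fun i _ => ?_)
    rw [intervalIntegral.integral_finset_sum (fun j _ =>
      II_of_bdd (bpsi_mul_meas _ _) 1 (bpsi_mul_bdd _ _) 0 1)]
    exact Finset.sum_congr rfl (fun j _ => integral_bpsi_mul _ _)
  · refine II_of_bdd (Finset.measurable_sum _ (fun j _ => bpsi_mul_meas _ _)) T.card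
      (fun w => ?_) 0 1
    calc |∑ j ∈ T, bpsi (y i - w) * bpsi (y j - w)|
        ≤ ∑ j ∈ T, |bpsi (y i - w) * bpsi (y j - w)| := Finset.abs_sum_le_sum_abs _ _
      _ ≤ ∑ _j ∈ T, (1:ℝ) := Finset.sum_le_sum (fun j _ => bpsi_mul_bdd _ _ _)
      _ = T.card := by simp

lemma key_lower :
    ∑ i ∈ T, ∑ j ∈ T, bbc (y i - y j)
      ≤ ∫ u in (0:ℝ)..1, (∑ i ∈ T, (bpsi (y i - u) - bpsi (y i)))^2 := by
  set A : ℝ → ℝ := fun u => ∑ i ∈ T, bpsi (y i - u) with hA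
  set A₀ : ℝ := ∑ i ∈ T, bpsi (y i) with hA0
  have e : ∀ u : ℝ, (∑ i ∈ T, (bpsi (y i - u) - bpsi (y i)))^2
      = A u^2 - 2*A₀*(A u) + A₀^2 := by
    intro u; rw [Finset.sum_sub_distrib]; ring
  simp only [e]
  have IA : IntervalIntegrable A volume 0 1 :=
    II_of_bdd (sumpsi_meas T y) T.card (sumpsi_bdd T y) 0 1
  have IA2 : IntervalIntegrable (fun u => A u ^2) volume 0 1 :=
    II_of_bdd (sumpsi_sq_meas T y) ((T.card:ℝ)^2) (sumpsi_sq_bdd T y) 0 1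
  have hintA : ∫ u in (0:ℝ)..1, A u = 0 := by
    have h := intervalIntegral.integral_finset_sum (μ := volume) (a := (0:ℝ)) (b := 1)
      (s := T) (f := fun (i : ι) (u : ℝ) => bpsi (y i - u)) (fun i _ =>
        II_of_bdd (bpsi_meas.comp (measurable_const.sub measurable_id)) 1
          (fun u => bpsi_bdd _) 0 1)
    simpa [hA] using h.trans (Finset.sum_eq_zero (fun i _ => integral_bpsi (y i)))
  rw [intervalIntegral.integral_add (IA2.sub ((IA.const_mul (2*A₀))))
      intervalIntegrable_const,
    intervalIntegral.integral_sub IA2 (IA.const_mul (2*A₀)),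
    intervalIntegral.integral_const_mul, hintA, sum_sq_integral T y]
  simp only [intervalIntegral.integral_const, smul_eq_mul]
  nlinarith [sq_nonneg A₀]

lemma class_bound (hT : T.Nonempty) :
    1/12 ≤ ∑ i ∈ T, ∑ j ∈ T, bbc (y i - y j) := by
  rw [← sum_sq_integral T y]
  set m : ℕ := T.card with hm
  have hm0 : (m : ℤ) ≠ 0 := by
    simp [hm, Finset.card_ne_zero_of_mem hT.choose_spec]
  set b : ℝ := (∑ i ∈ T, y i) - m/2 with hb
  have hpt : ∀ w ∈ Set.Icc (0:ℝ) 1,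
      bdel (((m:ℤ):ℝ)*w + (-b)) ^2 ≤ (∑ i ∈ T, bpsi (y i - w))^2 := by
    intro w _
    have hz : (((m:ℤ):ℝ)*w + (-b)) + (∑ i ∈ T, bpsi (y i - w))
        = ((- ∑ i ∈ T, ⌊y i - w⌋ : ℤ) : ℝ) := by
      have : ∀ i ∈ T, bpsi (y i - w) = y i - w - (⌊y i - w⌋:ℝ) - 1/2 := by
        intro i _
        rw [bpsi, ← Int.self_sub_floor]
      rw [Finset.sum_congr rfl this]
      simp only [Finset.sum_sub_distrib, Finset.sum_const, nsmul_eq_mul, hb, hm]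
      push_cast
      ring
    have h1 := bdel_le_abs _ hz
    calc bdel (((m:ℤ):ℝ)*w + (-b)) ^2 ≤ |∑ i ∈ T, bpsi (y i - w)|^2 := by
          apply pow_le_pow_left₀ (bdel_nonneg _) h1
      _ = (∑ i ∈ T, bpsi (y i - w))^2 := sq_abs _
  have hIdel : ∀ a c : ℝ, IntervalIntegrable (fun v => bdel v ^2) volume a c :=
    fun a c => II_of_bdd bdel_sq_meas 1 bdel_sq_bdd a c
  calc (1:ℝ)/12 = ∫ w in (0:ℝ)..1, bdel (((m:ℤ):ℝ)*w + (-b)) ^2 := by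
        rw [per_int_eval bdel_sq_periodic hIdel m hm0 (-b), integral_bdel_sq]
    _ ≤ ∫ w in (0:ℝ)..1, (∑ i ∈ T, bpsi (y i - w))^2 := by
        apply intervalIntegral.integral_mono_on (by norm_num) ?_ ?_ hpt
        · exact II_of_bdd (bdel_sq_meas.comp ((measurable_const.mul measurable_id).add
            measurable_const)) 1 (fun w => bdel_sq_bdd _) 0 1
        · exact II_of_bdd (sumpsi_sq_meas T y) ((T.card:ℝ)^2) (sumpsi_sq_bdd T y) 0 1

end SQ

lemma sector_mem_iff {u v R : ℝ} (hu0 : 0 ≤ u) (hu1 : u ≤ 1) (hR : 0 < R) :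
    (∃ ρ θ : ℝ, 0 < ρ ∧ 0 ≤ θ ∧ θ ≤ 2 * Real.pi * u ∧
      ((R:ℂ) * Complex.exp (((2 * Real.pi * v : ℝ) : ℂ) * Complex.I)
        = (ρ : ℂ) * Complex.exp ((θ:ℂ) * Complex.I)))
    ↔ Int.fract v ≤ u := by
  have hpi := Real.pi_pos
  constructor
  · rintro ⟨ρ, θ, hρ, hθ0, hθu, heq⟩
    have habs : R = ρ := by
      have := congrArg (‖·‖) heq
      simpa [Complex.norm_exp, abs_of_pos hR, abs_of_pos hρ] using this
    subst habs
    have hexp : Complex.exp (((2 * Real.pi * v : ℝ) : ℂ) * Complex.I)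
        = Complex.exp ((θ:ℂ) * Complex.I) :=
      mul_left_cancel₀ (by exact_mod_cast hR.ne') heq
    obtain ⟨z, hz⟩ := Complex.exp_eq_exp_iff_exists_int.mp hexp
    have hreal : 2 * Real.pi * v = θ + z * (2 * Real.pi) := by
      have := congrArg Complex.im hz
      simpa using this
    -- θ = 2π (v - z)
    have hv1 : (0:ℝ) ≤ v - z := by nlinarith
    have hv2 : v - z ≤ u := by nlinarith
    rcases lt_or_ge (v - (z:ℝ)) 1 with h | h
    · have : Int.fract v = v - z := by
        rw [Int.fract_eq_iff]
        exact ⟨hv1, by linarith, ⟨z, by ring⟩⟩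
      rw [this]; exact hv2
    · have : v - z = 1 := le_antisymm (by linarith) h
      have hu : u = 1 := le_antisymm hu1 (by linarith)
      rw [hu]; exact (Int.fract_lt_one v).le
  · intro hfr
    refine ⟨R, 2 * Real.pi * Int.fract v, hR,
      mul_nonneg (by positivity) (Int.fract_nonneg v),
      by nlinarith [Int.fract_nonneg v], ?_⟩
    have harg : Complex.exp (((2 * Real.pi * v : ℝ) : ℂ) * Complex.I)
        = Complex.exp (((2 * Real.pi * Int.fract v : ℝ) : ℂ) * Complex.I) := by
      rw [show ((2 * Real.pi * v : ℝ) : ℂ) * Complex.I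
          = ((2 * Real.pi * Int.fract v : ℝ) : ℂ) * Complex.I
            + (⌊v⌋ : ℤ) * (2 * Real.pi * Complex.I) by
        push_cast
        rw [← Int.self_sub_floor]
        push_cast
        ring]
      rw [Complex.exp_add, Complex.exp_int_mul_two_pi_mul_I, mul_one]
    rw [harg]

section Poly
variable {n : ℕ}

lemma evalY_factored (m₁ m₂ : ℕ) (c : Fin n → ℂ) (q : Fin n → ℕ) (a : ℂ) :
    evalY ((MvPolynomial.X 0) ^ m₁ * (MvPolynomial.X 1) ^ m₂ *
        ∏ i : Fin n, (MvPolynomial.X 0 - MvPolynomial.C (c i) * (MvPolynomial.X 1) ^ (q i))) a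
      = Polynomial.C (a ^ m₂) * (Polynomial.X ^ m₁ *
        ∏ i : Fin n, (Polynomial.X - Polynomial.C (c i * a ^ q i))) := by
  unfold evalY
  rw [show (MvPolynomial.eval₂ Polynomial.C
      (fun i : Fin 2 => if i = 0 then Polynomial.X else Polynomial.C a))
    = ⇑(MvPolynomial.eval₂Hom (Polynomial.C : ℂ →+* Polynomial ℂ)
      (fun i : Fin 2 => if i = 0 then Polynomial.X else Polynomial.C a)) from rfl]
  rw [map_mul, map_mul, map_pow, map_pow, map_prod]
  simp only [MvPolynomial.eval₂Hom_X', map_sub, map_mul, map_pow,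
    MvPolynomial.eval₂Hom_C]
  norm_num
  rw [← Polynomial.C_pow]
  ring

lemma roots_factored (m₁ : ℕ) (w : Fin n → ℂ) (b : ℂ) (hb : b ≠ 0) :
    (Polynomial.C b * (Polynomial.X ^ m₁ *
        ∏ i : Fin n, (Polynomial.X - Polynomial.C (w i)))).roots
      = m₁ • {0} + Finset.univ.val.map w := by
  have hprod : ∏ i : Fin n, (Polynomial.X - Polynomial.C (w i))
      = ((Finset.univ.val.map w).map (fun z => Polynomial.X - Polynomial.C z)).prod := by
    rw [Multiset.map_map]
    rfl
  have hmono : (Polynomial.X ^ m₁ * ∏ i : Fin n, (Polynomial.X - Polynomial.C (w i))).Monic :=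
    (Polynomial.monic_X_pow m₁).mul
      (Polynomial.monic_prod_of_monic _ _ (fun i _ => Polynomial.monic_X_sub_C _))
  rw [Polynomial.roots_C_mul _ hb,
    Polynomial.roots_mul hmono.ne_zero, Polynomial.roots_pow, Polynomial.roots_X,
    hprod, Polynomial.roots_multiset_prod_X_sub_C]

lemma nonzeroRoots_factored (m₁ : ℕ) (w : Fin n → ℂ) (hw : ∀ i, w i ≠ 0) (b : ℂ) (hb : b ≠ 0) :
    nonzeroRoots (Polynomial.C b * (Polynomial.X ^ m₁ *
        ∏ i : Fin n, (Polynomial.X - Polynomial.C (w i))))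
      = Finset.univ.val.map w := by
  unfold nonzeroRoots
  rw [roots_factored m₁ w b hb, Multiset.filter_add]
  have h1 : Multiset.filter (fun z => z ≠ 0) (m₁ • ({0} : Multiset ℂ)) = 0 := by
    rw [Multiset.filter_eq_nil]
    intro z hz
    have : z = 0 := by
      have := Multiset.mem_of_mem_nsmul hz
      simpa using this
    simp [this]
  have h2 : Multiset.filter (fun z => z ≠ 0) (Finset.univ.val.map w)
      = Finset.univ.val.map w := by
    rw [Multiset.filter_eq_self]
    intro z hz
    obtain ⟨i, _, rfl⟩ := Multiset.mem_map.mp hz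
    exact hw i
  rw [h1, h2, zero_add]

lemma sectorCount_factored (m₁ : ℕ) (w : Fin n → ℂ) (hw : ∀ i, w i ≠ 0) (b : ℂ) (hb : b ≠ 0)
    (α β : ℝ) :
    sectorCount (Polynomial.C b * (Polynomial.X ^ m₁ *
        ∏ i : Fin n, (Polynomial.X - Polynomial.C (w i)))) α β
      = (Finset.univ.filter (fun i => ∃ ρ θ : ℝ, 0 < ρ ∧ α ≤ θ ∧ θ ≤ β ∧
          w i = (ρ : ℂ) * Complex.exp ((θ:ℂ) * Complex.I))).card := by
  unfold sectorCount
  rw [nonzeroRoots_factored m₁ w hw b hb, Multiset.filter_map, Multiset.card_map]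
  rfl

end Poly

/-- For `f(x,y) = x^{m₁}·y^{m₂}·∏_{i=1}^n (x − aᵢ·y^{qᵢ})` with `aᵢ = rᵢ·e^{2πi sᵢ}`,
`rᵢ > 0`, `sᵢ ∈ [0,1)`, non-negative integer exponents `qᵢ` of which `k` are distinct,
there exists `a` on the unit circle with `B(f(x,a)) ≥ √(k/12)`. -/
theorem stmt19 (n m₁ m₂ : ℕ) (r : Fin n → ℝ) (hr : ∀ i, 0 < r i)
    (s : Fin n → ℝ) (hs : ∀ i, s i ∈ Set.Ico (0 : ℝ) 1) (q : Fin n → ℕ)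
    (k : ℕ) (hk : k = (Finset.univ.image q).card) :
    ∃ a : ℂ, ‖a‖ = 1 ∧
      Real.sqrt (k / 12) ≤ polyBias (evalY
        ((MvPolynomial.X 0) ^ m₁ * (MvPolynomial.X 1) ^ m₂ *
          ∏ i : Fin n,
            (MvPolynomial.X 0 -
              MvPolynomial.C ((r i : ℂ) * Complex.exp (2 * Real.pi * (s i) * Complex.I)) *
                (MvPolynomial.X 1) ^ (q i))) a) := by
  have hpi := Real.pi_pos
  -- continuity of `bbc` and the averaged function `G`
  have hbbc_cont : Continuous bbc := by
    have h := ContinuousOn.comp_fract'' (f := fun x : ℝ => (x^2 - x + 1/6)/2)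
      (by fun_prop) (by norm_num)
    exact h
  set G : ℝ → ℝ := fun t => ∑ i : Fin n, ∑ j : Fin n,
    bbc ((s i + (q i : ℝ) * t) - (s j + (q j : ℝ) * t)) with hG
  have hGcont : Continuous G := by
    apply continuous_finset_sum _ (fun i _ => ?_)
    apply continuous_finset_sum _ (fun j _ => ?_)
    exact hbbc_cont.comp (by fun_prop)
  obtain ⟨t₀, ht₀mem, ht₀max⟩ :=
    isCompact_Icc.exists_isMaxOn (Set.nonempty_Icc.mpr zero_le_one) hGcont.continuousOn
  -- the value of ∫₀¹ G
  have hGval : ∫ t in (0:ℝ)..1, G t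
      = ∑ i : Fin n, ∑ j : Fin n, (if q i = q j then bbc (s i - s j) else 0) := by
    rw [hG]
    rw [intervalIntegral.integral_finset_sum (μ := volume) (a := (0:ℝ)) (b := 1)
      (s := Finset.univ)
      (f := fun (i : Fin n) (t : ℝ) => ∑ j : Fin n,
        bbc ((s i + (q i : ℝ) * t) - (s j + (q j : ℝ) * t)))
      (fun i _ => ((continuous_finset_sum _ (fun j _ =>
        hbbc_cont.comp (by fun_prop :
          Continuous (fun t : ℝ => (s i + (q i : ℝ) * t) - (s j + (q j : ℝ) * t)))))
        |>.intervalIntegrable 0 1))]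
    refine Finset.sum_congr rfl (fun i _ => ?_)
    rw [intervalIntegral.integral_finset_sum (μ := volume) (a := (0:ℝ)) (b := 1)
      (s := Finset.univ)
      (f := fun (j : Fin n) (t : ℝ) =>
        bbc ((s i + (q i : ℝ) * t) - (s j + (q j : ℝ) * t)))
      (fun j _ => ((hbbc_cont.comp (by fun_prop :
        Continuous (fun t : ℝ => (s i + (q i : ℝ) * t) - (s j + (q j : ℝ) * t))))
        |>.intervalIntegrable 0 1))]
    refine Finset.sum_congr rfl (fun j _ => ?_)
    rcases eq_or_ne (q i) (q j) with heq | hne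
    · have e : ∀ t : ℝ, (s i + (q i : ℝ) * t) - (s j + (q j : ℝ) * t) = s i - s j := by
        intro t; rw [heq]; ring
      simp only [e, if_pos heq]
      simp
    · have e : ∀ t : ℝ, (s i + (q i : ℝ) * t) - (s j + (q j : ℝ) * t)
          = (((q i : ℤ) - (q j : ℤ) : ℤ) : ℝ) * t + (s i - s j) := by
        intro t; push_cast; ring
      simp only [e, if_neg hne]
      rw [per_int_eval bbc_periodic (fun a b => hbbc_cont.intervalIntegrable a b)
        _ (sub_ne_zero.mpr (by exact_mod_cast hne)) _, integral_bbc]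
  -- class decomposition and lower bound k/12
  have hGsum : (k:ℝ)/12
      ≤ ∑ i : Fin n, ∑ j : Fin n, (if q i = q j then bbc (s i - s j) else 0) := by
    have hre : ∑ i : Fin n, ∑ j : Fin n, (if q i = q j then bbc (s i - s j) else 0)
        = ∑ v ∈ Finset.univ.image q, ∑ i ∈ Finset.univ.filter (fun i => q i = v),
            ∑ j ∈ Finset.univ.filter (fun j => q j = v), bbc (s i - s j) := by
      rw [← Finset.sum_fiberwise_of_maps_to
        (fun i (_ : i ∈ Finset.univ) => Finset.mem_image_of_mem q (Finset.mem_univ i))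
        (fun i => ∑ j : Fin n, (if q i = q j then bbc (s i - s j) else 0))]
      refine Finset.sum_congr rfl (fun v _ => ?_)
      refine Finset.sum_congr rfl (fun i hi => ?_)
      have hqi : q i = v := (Finset.mem_filter.mp hi).2
      rw [Finset.sum_filter]
      refine Finset.sum_congr rfl (fun j _ => ?_)
      congr 1
      simp [hqi, eq_comm]
    rw [hre]
    have heach : ∀ v ∈ Finset.univ.image q,
        (1:ℝ)/12 ≤ ∑ i ∈ Finset.univ.filter (fun i => q i = v),
          ∑ j ∈ Finset.univ.filter (fun j => q j = v), bbc (s i - s j) := by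
      intro v hv
      obtain ⟨i, _, hqi⟩ := Finset.mem_image.mp hv
      exact class_bound _ s ⟨i, Finset.mem_filter.mpr ⟨Finset.mem_univ i, hqi⟩⟩
    calc (k:ℝ)/12 = (Finset.univ.image q).card • ((1:ℝ)/12) := by
          rw [hk]; rw [nsmul_eq_mul]; ring
      _ ≤ _ := Finset.card_nsmul_le_sum _ _ _ heach
  have ht₀ : (k:ℝ)/12 ≤ G t₀ := by
    have h1 : ∫ t in (0:ℝ)..1, G t ≤ ∫ _t in (0:ℝ)..1, G t₀ := by
      apply intervalIntegral.integral_mono_on zero_le_one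
        (hGcont.intervalIntegrable 0 1) intervalIntegrable_const
      intro x hx
      exact ht₀max hx
    rw [intervalIntegral.integral_const, smul_eq_mul] at h1
    rw [hGval] at h1
    linarith [hGsum]
  -- the chosen point on the unit circle
  set a : ℂ := Complex.exp (((2 * Real.pi * t₀ : ℝ) : ℂ) * Complex.I) with ha
  have haone : ‖a‖ = 1 := by
    rw [ha, Complex.norm_exp]
    simp
  refine ⟨a, haone, ?_⟩
  set c : Fin n → ℂ := fun i => (r i : ℂ) * Complex.exp (2 * Real.pi * (s i) * Complex.I)
    with hc
  have hwne : ∀ i, c i * a ^ (q i) ≠ 0 := fun i =>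
    mul_ne_zero (mul_ne_zero (by exact_mod_cast (hr i).ne') (Complex.exp_ne_zero _))
      (pow_ne_zero _ (Complex.exp_ne_zero _))
  have hb : a ^ m₂ ≠ 0 := pow_ne_zero _ (Complex.exp_ne_zero _)
  rw [evalY_factored m₁ m₂ c q a]
  set g : Polynomial ℂ := Polynomial.C (a ^ m₂) * (Polynomial.X ^ m₁ *
    ∏ i : Fin n, (Polynomial.X - Polynomial.C (c i * a ^ q i))) with hg
  -- polar form of the roots
  have hwpolar : ∀ i, c i * a ^ (q i)
      = ((r i : ℝ) : ℂ) * Complex.exp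
          (((2 * Real.pi * (s i + (q i : ℝ) * t₀) : ℝ) : ℂ) * Complex.I) := by
    intro i
    rw [hc, ha]
    rw [← Complex.exp_nat_mul, mul_assoc, ← Complex.exp_add]
    congr 2
    push_cast
    ring
  -- counting roots in sectors
  have hsec : ∀ u : ℝ, 0 ≤ u → u ≤ 1 → sectorCount g 0 (2 * Real.pi * u)
      = (Finset.univ.filter
          (fun i => Int.fract (s i + (q i : ℝ) * t₀) ≤ u)).card := by
    intro u h0 h1
    rw [hg, sectorCount_factored m₁ _ hwne _ hb]
    congr 1
    apply Finset.filter_congr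
    intro i _
    rw [hwpolar i]
    exact sector_mem_iff h0 h1 (hr i)
  have hcard : ((nonzeroRoots g).card : ℝ) = n := by
    rw [hg, nonzeroRoots_factored m₁ _ hwne _ hb]
    simp
  -- the bias set
  set S : Set ℝ := {x : ℝ | ∃ α β : ℝ, 0 ≤ α ∧ α ≤ β ∧ β ≤ 2 * Real.pi ∧
    x = |(sectorCount g α β : ℝ) -
      ((nonzeroRoots g).card : ℝ) * (β - α) / (2 * Real.pi)|} with hS
  have hpoly : polyBias g = sSup S := rfl
  have hSbdd : BddAbove S := by
    refine ⟨(n:ℝ) + n, ?_⟩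
    rintro x ⟨α, β, hα, hαβ, hβ, rfl⟩
    have h1 : (sectorCount g α β : ℝ) ≤ n := by
      have h2 : sectorCount g α β ≤ Multiset.card (nonzeroRoots g) :=
        Multiset.card_le_card (Multiset.filter_le _ _)
      calc (sectorCount g α β : ℝ) ≤ ((nonzeroRoots g).card : ℝ) := by exact_mod_cast h2
        _ = n := hcard
    have h3 : 0 ≤ ((nonzeroRoots g).card : ℝ) * (β - α) / (2 * Real.pi) := by
      apply div_nonneg (mul_nonneg (by positivity) (by linarith)) (by positivity)
    have h4 : ((nonzeroRoots g).card : ℝ) * (β - α) / (2 * Real.pi) ≤ n := by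
      rw [hcard, div_le_iff₀ (by positivity)]
      have : β - α ≤ 2 * Real.pi := by linarith
      nlinarith [Nat.cast_nonneg (α := ℝ) n]
    rw [abs_le]
    constructor <;> [nlinarith [Nat.cast_nonneg (α := ℝ) (sectorCount g α β)]; nlinarith]
  have hM0 : 0 ≤ polyBias g := by
    have hx : |(sectorCount g 0 0 : ℝ) - ((nonzeroRoots g).card : ℝ) * (0 - 0) / (2 * Real.pi)|
        ∈ S := ⟨0, 0, le_refl 0, le_refl 0, by positivity, rfl⟩
    exact le_trans (abs_nonneg _) (le_csSup hSbdd hx)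
  -- the discrepancy function
  set Dm : ℝ → ℝ := fun u => ∑ i : Fin n,
    (bpsi (s i + (q i : ℝ) * t₀ - u) - bpsi (s i + (q i : ℝ) * t₀)) with hDm
  have hlow : (k:ℝ)/12 ≤ ∫ u in (0:ℝ)..1, (Dm u)^2 := by
    refine le_trans (le_trans ht₀ (le_of_eq ?_))
      (key_lower Finset.univ (fun i => s i + (q i : ℝ) * t₀))
    rw [hG]
  -- measurability and bound for Dm
  have hDmeas : Measurable Dm := by
    apply Finset.measurable_sum
    intro i _
    exact (bpsi_meas.comp (measurable_const.sub measurable_id)).sub measurable_const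
  have hDbdd : ∀ u, |Dm u| ≤ 2 * n := by
    intro u
    calc |Dm u| ≤ ∑ i : Fin n,
        |bpsi (s i + (q i : ℝ) * t₀ - u) - bpsi (s i + (q i : ℝ) * t₀)| :=
          Finset.abs_sum_le_sum_abs _ _
      _ ≤ ∑ _i : Fin n, (2:ℝ) := Finset.sum_le_sum (fun i _ => by
          calc |bpsi (s i + (q i : ℝ) * t₀ - u) - bpsi (s i + (q i : ℝ) * t₀)|
              ≤ |bpsi (s i + (q i : ℝ) * t₀ - u)| + |bpsi (s i + (q i : ℝ) * t₀)| :=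
                abs_sub _ _
            _ ≤ 2 := by linarith [bpsi_bdd (s i + (q i : ℝ) * t₀ - u),
                bpsi_bdd (s i + (q i : ℝ) * t₀)])
      _ = 2 * n := by simp [mul_comm]
  -- pointwise bound off a finite bad set
  set Bad : Finset ℝ := Finset.univ.image (fun i : Fin n => Int.fract (s i + (q i : ℝ) * t₀))
    with hBad
  have hptb : ∀ u ∈ Set.Icc (0:ℝ) 1, u ∉ (Bad : Set ℝ) → (Dm u)^2 ≤ (polyBias g)^2 := by
    intro u hu hbad
    have hDval : Dm u
        = ((Finset.univ.filter
            (fun i => Int.fract (s i + (q i : ℝ) * t₀) ≤ u)).card : ℝ) - n * u := by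
      rw [hDm]
      have e : ∀ i : Fin n, bpsi (s i + (q i : ℝ) * t₀ - u) - bpsi (s i + (q i : ℝ) * t₀)
          = (if Int.fract (s i + (q i : ℝ) * t₀) ≤ u then (1:ℝ) else 0) - u := by
        intro i
        set x := Int.fract (s i + (q i : ℝ) * t₀) with hx
        have hx0 : 0 ≤ x := Int.fract_nonneg _
        have hx1 : x < 1 := Int.fract_lt_one _
        have hne : x ≠ u := by
          intro h
          exact hbad (by
            rw [← h]
            exact Finset.mem_coe.mpr (Finset.mem_image_of_mem _ (Finset.mem_univ i)))
        have e1 : bpsi (s i + (q i : ℝ) * t₀ - u) = bpsi (x - u) := bpsi_fract _ u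
        have e2 : bpsi (s i + (q i : ℝ) * t₀) = x - 1/2 := by rw [bpsi]
        rcases lt_or_ge x u with hlt | hge
        · have hf : Int.fract (x - u) = x - u + 1 :=
            fract_eq_add_one (by linarith [hu.2]) (by linarith)
          rw [e1, e2, bpsi, hf, if_pos hlt.le]
          ring
        · have hlt' : u < x := lt_of_le_of_ne hge (Ne.symm hne)
          have hf : Int.fract (x - u) = x - u :=
            Int.fract_eq_self.mpr ⟨by linarith [hu.1], by linarith [hu.1]⟩
          rw [e1, e2, bpsi, hf, if_neg (not_le.mpr hlt')]
          ring
      calc Dm u = ∑ i : Fin n,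
            ((if Int.fract (s i + (q i : ℝ) * t₀) ≤ u then (1:ℝ) else 0) - u) :=
          Finset.sum_congr rfl (fun i _ => e i)
        _ = _ := by
          rw [Finset.sum_sub_distrib, Finset.sum_boole, Finset.sum_const]
          simp [nsmul_eq_mul]
    have hmem : |Dm u| ∈ S := by
      refine ⟨0, 2 * Real.pi * u, le_refl 0,
        mul_nonneg (by positivity) hu.1, by nlinarith [hu.2], ?_⟩
      rw [hsec u hu.1 hu.2, hcard]
      rw [show (n:ℝ) * (2 * Real.pi * u - 0) / (2 * Real.pi) = n * u by
        field_simp; ring]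
      rw [hDval]
    have hle : |Dm u| ≤ polyBias g := hpoly ▸ le_csSup hSbdd hmem
    nlinarith [abs_nonneg (Dm u), sq_abs (Dm u)]
  -- integrate the bound
  have hup : ∫ u in (0:ℝ)..1, (Dm u)^2 ≤ (polyBias g)^2 := by
    have hae : ∀ᵐ u ∂(MeasureTheory.volume.restrict (Set.Icc (0:ℝ) 1)),
        (Dm u)^2 ≤ (polyBias g)^2 := by
      have h1 : ∀ᵐ u ∂(MeasureTheory.volume : MeasureTheory.Measure ℝ),
          u ∉ (Bad : Set ℝ) := by
        rw [MeasureTheory.ae_iff]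
        simpa using Bad.finite_toSet.measure_zero MeasureTheory.volume
      have h2 := MeasureTheory.ae_restrict_of_ae
        (μ := (MeasureTheory.volume : MeasureTheory.Measure ℝ)) (s := Set.Icc (0:ℝ) 1) h1
      have h3 : ∀ᵐ u ∂(MeasureTheory.volume.restrict (Set.Icc (0:ℝ) 1)),
          u ∈ Set.Icc (0:ℝ) 1 := MeasureTheory.ae_restrict_mem measurableSet_Icc
      filter_upwards [h2, h3] with u hu1 hu2
      exact hptb u hu2 hu1
    have hII : IntervalIntegrable (fun u => (Dm u)^2) MeasureTheory.volume 0 1 := by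
      refine II_of_bdd (hDmeas.pow_const 2) ((2*n)^2) (fun u => ?_) 0 1
      rw [abs_of_nonneg (sq_nonneg _), ← sq_abs]
      exact pow_le_pow_left₀ (abs_nonneg _) (hDbdd u) 2
    have := intervalIntegral.integral_mono_ae_restrict zero_le_one hII
      intervalIntegrable_const hae
    simpa using this
  have hfin : (k:ℝ)/12 ≤ (polyBias g)^2 := le_trans hlow hup
  calc Real.sqrt ((k:ℝ)/12) ≤ Real.sqrt ((polyBias g)^2) := Real.sqrt_le_sqrt hfin
    _ = polyBias g := Real.sqrt_sq hM0
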